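/- (Theorem 2, LS part.) The complex-gradient map G̃ of the LS objective is Lipschitz continuous on ℂ^N with Lipschitz constant 1 + (max_i M_i)/ε, with respect to the Euclidean norm ‖u‖² = Σᵢ |uᵢ|². -/

import Mathlib

/-- The complex-gradient map of the LS objective:
`G̃(u) = u − U* w̃(u)` with `w̃(u)ᵢ = Mᵢ (Uu)ᵢ/√(|(Uu)ᵢ|²+ε²)`. -/
noncomputable def lsGrad {N : ℕ} (U : Matrix (Fin N) (Fin N) ℂ)
    (M : Fin N → ℝ) (ε : ℝ) (u : EuclideanSpace ℂ (Fin N)) :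
    EuclideanSpace ℂ (Fin N) :=
  let w : EuclideanSpace ℂ (Fin N) := WithLp.toLp 2 ((star U).mulVec fun i =>
    (M i : ℂ) * U.mulVec u i /
      ((Real.sqrt ((‖U.mulVec u i‖) ^ 2 + ε ^ 2) : ℝ) : ℂ))
  u - w

/-- Coercion of a plain vector into `EuclideanSpace`. -/
noncomputable def toE {N : ℕ} (y : Fin N → ℂ) : EuclideanSpace ℂ (Fin N) :=
  (WithLp.equiv 2 (Fin N → ℂ)).symm y

@[simp] lemma toE_apply {N : ℕ} (y : Fin N → ℂ) (i : Fin N) : toE y i = y i := rfl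

/-- Norm preservation for a matrix with `star A * A = 1`. -/
lemma norm_mulVec_eq_aux {N : ℕ} (A : Matrix (Fin N) (Fin N) ℂ)
    (hA : star A * A = 1) (x : EuclideanSpace ℂ (Fin N)) :
    ‖toE (A.mulVec x)‖ = ‖x‖ := by
  have hinner : (inner (𝕜 := ℂ) (toE (A.mulVec x)) (toE (A.mulVec x)))
      = inner (𝕜 := ℂ) x x := by
    simp only [PiLp.inner_apply, RCLike.inner_apply, toE_apply]
    have h1 : ∀ y z : Fin N → ℂ,
        (∑ i, z i * (starRingEnd ℂ) (y i)) = dotProduct (star y) z := by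
      intro y z; exact Finset.sum_congr rfl (fun i _ => mul_comm _ _)
    have h2 : (∑ i, x i * (starRingEnd ℂ) (x i))
        = dotProduct (star (x : Fin N → ℂ)) (x : Fin N → ℂ) :=
      Finset.sum_congr rfl (fun i _ => mul_comm _ _)
    rw [h1, h2, Matrix.star_mulVec, Matrix.dotProduct_mulVec, Matrix.vecMul_vecMul,
      ← Matrix.star_eq_conjTranspose, hA, Matrix.vecMul_one]
  rw [@norm_eq_sqrt_re_inner ℂ, @norm_eq_sqrt_re_inner ℂ, hinner]

set_option maxHeartbeats 1000000 in
/-- The scalar Lipschitz estimate for `z ↦ z/√(|z|²+ε²)`. -/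
lemma key_scalar (ε : ℝ) (hε : 0 < ε) (z₁ z₂ : ℂ) :
    ‖z₁ / ((Real.sqrt ((‖z₁‖) ^ 2 + ε ^ 2) : ℝ) : ℂ)
      - z₂ / ((Real.sqrt ((‖z₂‖) ^ 2 + ε ^ 2) : ℝ) : ℂ)‖
      ≤ ‖z₁ - z₂‖ / ε := by
  set t₁ := ‖z₁‖ with ht₁
  set t₂ := ‖z₂‖ with ht₂
  have ht₁0 : 0 ≤ t₁ := norm_nonneg _
  have ht₂0 : 0 ≤ t₂ := norm_nonneg _
  set s₁ := Real.sqrt (t₁ ^ 2 + ε ^ 2) with hs₁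
  set s₂ := Real.sqrt (t₂ ^ 2 + ε ^ 2) with hs₂
  have hs₁sq : s₁ ^ 2 = t₁ ^ 2 + ε ^ 2 := Real.sq_sqrt (by positivity)
  have hs₂sq : s₂ ^ 2 = t₂ ^ 2 + ε ^ 2 := Real.sq_sqrt (by positivity)
  have hs₁0 : 0 < s₁ := Real.sqrt_pos.2 (by positivity)
  have hs₂0 : 0 < s₂ := Real.sqrt_pos.2 (by positivity)
  have hQ : t₁ * t₂ + ε ^ 2 ≤ s₁ * s₂ := by
    rw [hs₁, hs₂, ← Real.sqrt_mul (by positivity)]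
    rw [show t₁ * t₂ + ε ^ 2 = Real.sqrt ((t₁ * t₂ + ε ^ 2) ^ 2) from
      (Real.sqrt_sq (by positivity)).symm]
    apply Real.sqrt_le_sqrt
    nlinarith [sq_nonneg (t₁ * ε - t₂ * ε)]
  set r := (z₁ * (starRingEnd ℂ) z₂).re with hrdef
  have hr : r ≤ t₁ * t₂ := by
    calc r ≤ ‖z₁ * (starRingEnd ℂ) z₂‖ := Complex.re_le_norm _
    _ = t₁ * t₂ := by rw [norm_mul, Complex.norm_conj]
  have hc₁ : ((s₁ : ℝ) : ℂ) ≠ 0 := by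
    simpa using ne_of_gt hs₁0
  have hc₂ : ((s₂ : ℝ) : ℂ) ≠ 0 := by
    simpa using ne_of_gt hs₂0
  have hX : z₁ / (s₁ : ℂ) - z₂ / (s₂ : ℂ) = (z₁ * s₂ - z₂ * s₁) / ((s₁ : ℂ) * s₂) := by
    rw [div_sub_div _ _ hc₁ hc₂, mul_comm ((s₁ : ℝ) : ℂ) z₂]
  rw [hX, norm_div]
  have habs : ‖(s₁ : ℂ) * s₂‖ = s₁ * s₂ := by
    rw [norm_mul, Complex.norm_real, Complex.norm_real, Real.norm_eq_abs, Real.norm_eq_abs,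
      abs_of_pos hs₁0, abs_of_pos hs₂0]
  rw [habs, div_le_div_iff₀ (by positivity) hε]
  have hnum : (‖z₁ * (s₂ : ℂ) - z₂ * (s₁ : ℂ)‖) ^ 2
      = s₂ ^ 2 * t₁ ^ 2 + s₁ ^ 2 * t₂ ^ 2 - 2 * (s₁ * s₂) * r := by
    rw [Complex.sq_norm, Complex.normSq_sub]
    have hre : (z₁ * (s₂:ℂ) * (starRingEnd ℂ) (z₂ * (s₁:ℂ))).re = s₁ * s₂ * r := by
      have heq : z₁ * (s₂:ℂ) * (starRingEnd ℂ) (z₂ * (s₁:ℂ))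
          = ((s₁ * s₂ : ℝ) : ℂ) * (z₁ * (starRingEnd ℂ) z₂) := by
        simp only [map_mul, Complex.conj_ofReal]
        push_cast
        ring
      rw [heq, Complex.re_ofReal_mul, ← hrdef]
    rw [hre]
    simp only [← Complex.sq_norm, norm_mul, Complex.norm_real, Real.norm_eq_abs, abs_of_pos hs₁0,
      abs_of_pos hs₂0, ← ht₁, ← ht₂]
    ring
  have hdiff : (‖z₁ - z₂‖) ^ 2 = t₁ ^ 2 + t₂ ^ 2 - 2 * r := by
    rw [Complex.sq_norm, Complex.normSq_sub, ← hrdef,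
      ← Complex.sq_norm z₁, ← Complex.sq_norm z₂, ← ht₁, ← ht₂]
  have hmain : (‖z₁ * (s₂ : ℂ) - z₂ * (s₁ : ℂ)‖) ^ 2 * ε ^ 2
      ≤ (‖z₁ - z₂‖) ^ 2 * (s₁ * s₂) ^ 2 := by
    rw [hnum, hdiff, hs₁sq, hs₂sq]
    have hQ2 : ε ^ 2 ≤ s₁ * s₂ := le_trans (by nlinarith) hQ
    have hPQ : ε ^ 2 * (s₁ * s₂) ≤ (s₁ * s₂) * (s₁ * s₂) := by nlinarith
    have h2 : 0 ≤ (t₁ * t₂ - r) * ((s₁ * s₂) * (s₁ * s₂) - ε ^ 2 * (s₁ * s₂)) :=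
      mul_nonneg (by linarith) (by linarith)
    have h3 : 0 ≤ (ε ^ 2 * (t₁ * t₂)) * (s₁ * s₂ - (t₁ * t₂ + ε ^ 2)) :=
      mul_nonneg (by positivity) (by linarith)
    have h4 : 0 ≤ t₁ ^ 2 * t₂ ^ 2 * (t₁ - t₂) ^ 2 := by positivity
    have h5 : 0 ≤ ε ^ 2 * (t₁ ^ 2 + t₂ ^ 2) * (t₁ - t₂) ^ 2 := by positivity
    have hQsq : (s₁ * s₂) ^ 2 = (t₁ ^ 2 + ε ^ 2) * (t₂ ^ 2 + ε ^ 2) := by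
      rw [mul_pow, hs₁sq, hs₂sq]
    nlinarith [h2, h3, h4, h5, hQsq]
  have hL : 0 ≤ ‖z₁ * (s₂ : ℂ) - z₂ * (s₁ : ℂ)‖ * ε := by positivity
  have hR : 0 ≤ ‖z₁ - z₂‖ * (s₁ * s₂) := by positivity
  nlinarith [hmain, hL, hR]

/-- Pointwise domination gives a norm bound in `EuclideanSpace`. -/
lemma norm_le_of_pointwise {N : ℕ} (C : ℝ) (hC : 0 ≤ C)
    (x y : EuclideanSpace ℂ (Fin N))
    (h : ∀ i, ‖x i‖ ≤ C * ‖y i‖) :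
    ‖x‖ ≤ C * ‖y‖ := by
  rw [EuclideanSpace.norm_eq, EuclideanSpace.norm_eq]
  rw [← Real.sqrt_sq hC, ← Real.sqrt_mul (sq_nonneg C)]
  apply Real.sqrt_le_sqrt
  rw [Finset.mul_sum]
  apply Finset.sum_le_sum
  intro i _
  have hi := h i
  have h1 : ‖x i‖ = ‖x i‖ := rfl
  have h2 : ‖y i‖ = ‖y i‖ := rfl
  rw [h1, h2]
  nlinarith [norm_nonneg (x i), norm_nonneg (y i)]

/-- Theorem 2, LS part: the complex-gradient map of the LS
objective is Lipschitz with constant `1 + (maxᵢ Mᵢ)/ε` in the Euclidean norm. -/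
theorem lsGrad_lipschitz {N : ℕ} (hN : 0 < N)
    (U : Matrix (Fin N) (Fin N) ℂ) (hU : star U * U = 1 ∧ U * star U = 1)
    (M : Fin N → ℝ) (hM : ∀ i, 0 ≤ M i) (ε : ℝ) (hε : 0 < ε) :
    ∀ u w : EuclideanSpace ℂ (Fin N),
      ‖lsGrad U M ε u - lsGrad U M ε w‖ ≤
        (1 + (⨆ i : Fin N, M i) / ε) * ‖u - w‖ := by
  intro u w
  haveI : Nonempty (Fin N) := ⟨⟨0, hN⟩⟩
  set C := ⨆ i : Fin N, M i with hC
  have hCge : ∀ i, M i ≤ C := fun i => le_ciSup (Set.Finite.bddAbove (Set.finite_range M)) i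
  have hC0 : 0 ≤ C := le_trans (hM (Classical.arbitrary _)) (hCge _)
  set v₁ : Fin N → ℂ := fun i =>
    (M i : ℂ) * U.mulVec u i /
      ((Real.sqrt ((‖U.mulVec u i‖) ^ 2 + ε ^ 2) : ℝ) : ℂ) with hv₁
  set v₂ : Fin N → ℂ := fun i =>
    (M i : ℂ) * U.mulVec w i /
      ((Real.sqrt ((‖U.mulVec w i‖) ^ 2 + ε ^ 2) : ℝ) : ℂ) with hv₂
  have hsplit : lsGrad U M ε u - lsGrad U M ε w
      = (u - w) - toE ((star U).mulVec (toE v₁ - toE v₂)) := by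
    ext i
    simp only [lsGrad, toE_apply, PiLp.sub_apply]
    have hsub : ((toE v₁ : EuclideanSpace ℂ (Fin N)) : Fin N → ℂ) - (toE v₂ : Fin N → ℂ)
        = fun j => v₁ j - v₂ j := by
      funext j; simp [PiLp.sub_apply]
    rw [hsub]
    have : (star U).mulVec (fun j => v₁ j - v₂ j)
        = (star U).mulVec v₁ - (star U).mulVec v₂ := by
      rw [show (fun j => v₁ j - v₂ j) = v₁ - v₂ from rfl, Matrix.mulVec_sub]
    rw [this]
    simp only [Pi.sub_apply]
    ring
  rw [hsplit]
  have h1 : ‖(u - w) - toE ((star U).mulVec (toE v₁ - toE v₂))‖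
      ≤ ‖u - w‖ + ‖toE ((star U).mulVec (toE v₁ - toE v₂))‖ :=
    norm_sub_le _ _
  have hUstar : star (star U) * star U = 1 := by rw [star_star]; exact hU.2
  have h2 : ‖toE ((star U).mulVec (toE v₁ - toE v₂))‖ = ‖toE v₁ - toE v₂‖ :=
    norm_mulVec_eq_aux (star U) hUstar (toE v₁ - toE v₂)
  have h3 : ‖toE v₁ - toE v₂‖ ≤ (C / ε) * ‖toE (U.mulVec (u - w))‖ := by
    apply norm_le_of_pointwise _ (by positivity)
    intro i
    have hxi : (toE v₁ - toE v₂ : EuclideanSpace ℂ (Fin N)) i = v₁ i - v₂ i := by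
      simp [PiLp.sub_apply]
    have hyi : (toE (U.mulVec (u - w))) i = U.mulVec u i - U.mulVec w i := by
      have : U.mulVec ((u - w : EuclideanSpace ℂ (Fin N)) : Fin N → ℂ)
          = U.mulVec u - U.mulVec w := by
        have hsub : ((u - w : EuclideanSpace ℂ (Fin N)) : Fin N → ℂ)
            = (u : Fin N → ℂ) - (w : Fin N → ℂ) := by
          funext j; simp [PiLp.sub_apply]
        rw [hsub, Matrix.mulVec_sub]
      simp only [toE_apply, this, Pi.sub_apply, Matrix.mulVec_sub]
    rw [hxi, hyi]
    have hfact : v₁ i - v₂ i = (M i : ℂ) * (U.mulVec u i /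
          ((Real.sqrt ((‖U.mulVec u i‖) ^ 2 + ε ^ 2) : ℝ) : ℂ)
        - U.mulVec w i /
          ((Real.sqrt ((‖U.mulVec w i‖) ^ 2 + ε ^ 2) : ℝ) : ℂ)) := by
      simp only [hv₁, hv₂]
      ring
    rw [hfact, norm_mul, Complex.norm_real, Real.norm_eq_abs, abs_of_nonneg (hM i)]
    have hkey := key_scalar ε hε (U.mulVec u i) (U.mulVec w i)
    calc M i * ‖_‖ ≤ M i * (‖U.mulVec u i - U.mulVec w i‖ / ε) :=
          mul_le_mul_of_nonneg_left hkey (hM i)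
      _ ≤ C * (‖U.mulVec u i - U.mulVec w i‖ / ε) :=
          mul_le_mul_of_nonneg_right (hCge i) (by positivity)
      _ = C / ε * ‖U.mulVec u i - U.mulVec w i‖ := by ring
  have h4 : ‖toE (U.mulVec (u - w))‖ = ‖u - w‖ := norm_mulVec_eq_aux U hU.1 (u - w)
  calc ‖(u - w) - toE ((star U).mulVec (toE v₁ - toE v₂))‖
      ≤ ‖u - w‖ + ‖toE v₁ - toE v₂‖ := by rw [← h2]; exact h1
    _ ≤ ‖u - w‖ + (C / ε) * ‖u - w‖ := by
        rw [← h4]; linarith [h3]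
    _ = (1 + C / ε) * ‖u - w‖ := by ring
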